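/- arXiv:1809.00210 — 3 statements merged into one kernel-verified Lean document; each statement's English description precedes it below -/
import Mathlib

section
/- For sorted nonnegative reals d_1 ≤ ⋯ ≤ d_N, j* and p* as in the greedy construction (j* = max{j ≤ N−1 : ∑_{i≤j} d_i ≤ θN}, p* = (θN − ∑_{i≤j*} d_i)/d_{j*+1}, assuming ∑_{i=1}^N d_i > θN), and ε ∈ (0,1): (j* + p*)/N ≤ ε if and only if (1/N)·(∑_{i=1}^{⌊εN⌋} d_i + (εN − ⌊εN⌋) d_{⌊εN⌋+1}) ≥ θ. -/
/-!
Interpolate the partial sums linearly: `F t = ∑_{i < ⌊t⌋} d i + (t - ⌊t⌋) d ⌊t⌋`. Because `d` is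
nonnegative and sorted, `F` is nondecreasing, and strictly increasing wherever it is positive (it can
only be flat where `d ⌊t⌋ = 0`, and then `d` vanishes on `[0, ⌊t⌋]`, so `F` vanishes on `[0, t]`).
The greedy point `j* + p*` is exactly where `F` reaches `θ N > 0`, so `j* + p* ≤ ε N` iff
`θ N ≤ F (ε N)`.
-/

open Finset

noncomputable def fracPartialSum (d : ℕ → ℝ) (t : ℝ) : ℝ :=
  ∑ i ∈ range ⌊t⌋₊, d i + (t - ⌊t⌋₊) * d ⌊t⌋₊

section FracPartialSum

variable {d : ℕ → ℝ} {n : ℕ} {s t : ℝ}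

lemma fracPartialSum_natCast_add (d : ℕ → ℝ) (k : ℕ) {p : ℝ} (hp0 : 0 ≤ p) (hp1 : p < 1) :
    fracPartialSum d (k + p) = ∑ i ∈ range k, d i + p * d k := by
  have hfloor : ⌊(k : ℝ) + p⌋₊ = k :=
    (Nat.floor_eq_iff (by positivity)).2 ⟨by linarith, by linarith⟩
  simp only [fracPartialSum, hfloor, add_sub_cancel_left]

lemma sum_range_le_sum_range (hd0 : ∀ i < n, 0 ≤ d i) {a b : ℕ} (hab : a ≤ b) (hb : b ≤ n) :
    ∑ i ∈ range a, d i ≤ ∑ i ∈ range b, d i :=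
  sum_le_sum_of_subset_of_nonneg (range_subset_range.2 hab) fun i hi _ =>
    hd0 i ((mem_range.1 hi).trans_le hb)

lemma fracPartialSum_eq_zero (hd0 : ∀ i < n, 0 ≤ d i) (hd : MonotoneOn d (Set.Iio n))
    (ht0 : 0 ≤ t) (htn : t < n) (hdt : d ⌊t⌋₊ = 0) : fracPartialSum d t = 0 := by
  have hkn : ⌊t⌋₊ < n := (Nat.floor_lt ht0).2 htn
  have hsum : ∑ i ∈ range ⌊t⌋₊, d i = 0 := sum_eq_zero fun i hi => by
    have hik := mem_range.1 hi
    exact le_antisymm (hdt ▸ hd (hik.trans hkn) hkn hik.le) (hd0 i (hik.trans hkn))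
  simp only [fracPartialSum, hsum, hdt, mul_zero, add_zero]

lemma sum_range_floor_le_fracPartialSum (ht : 0 ≤ t) (hdt : 0 ≤ d ⌊t⌋₊) :
    ∑ i ∈ range ⌊t⌋₊, d i ≤ fracPartialSum d t :=
  le_add_of_nonneg_right (mul_nonneg (sub_nonneg.2 (Nat.floor_le ht)) hdt)

lemma fracPartialSum_lt_sum_range_succ (hdt : 0 < d ⌊t⌋₊) :
    fracPartialSum d t < ∑ i ∈ range (⌊t⌋₊ + 1), d i := by
  have hfrac : t - ⌊t⌋₊ < 1 := by linarith [Nat.lt_floor_add_one t]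
  rw [sum_range_succ]
  exact (add_lt_add_iff_left _).2 (mul_lt_of_lt_one_left hdt hfrac)

lemma fracPartialSum_le_sum_range_succ (hdt : 0 ≤ d ⌊t⌋₊) :
    fracPartialSum d t ≤ ∑ i ∈ range (⌊t⌋₊ + 1), d i := by
  have hfrac : t - ⌊t⌋₊ ≤ 1 := by linarith [Nat.lt_floor_add_one t]
  rw [sum_range_succ]
  exact (add_le_add_iff_left _).2 (mul_le_of_le_one_left hdt hfrac)

lemma fracPartialSum_mono (hd0 : ∀ i < n, 0 ≤ d i) (hs : 0 ≤ s) (hst : s ≤ t) (htn : t < n) :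
    fracPartialSum d s ≤ fracPartialSum d t := by
  have hsn : ⌊s⌋₊ < n := (Nat.floor_lt hs).2 (hst.trans_lt htn)
  have htn' : ⌊t⌋₊ < n := (Nat.floor_lt (hs.trans hst)).2 htn
  rcases (Nat.floor_mono hst).eq_or_lt with heq | hlt
  · unfold fracPartialSum
    rw [heq]
    gcongr
    exact hd0 _ htn'
  · calc fracPartialSum d s ≤ ∑ i ∈ range (⌊s⌋₊ + 1), d i :=
          fracPartialSum_le_sum_range_succ (hd0 _ hsn)
      _ ≤ ∑ i ∈ range ⌊t⌋₊, d i := sum_range_le_sum_range hd0 hlt htn'.le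
      _ ≤ fracPartialSum d t := sum_range_floor_le_fracPartialSum (hs.trans hst) (hd0 _ htn')

lemma fracPartialSum_lt_of_lt (hd0 : ∀ i < n, 0 ≤ d i) (hd : MonotoneOn d (Set.Iio n))
    (hs : 0 ≤ s) (hst : s < t) (htn : t < n) (hpos : 0 < fracPartialSum d t) :
    fracPartialSum d s < fracPartialSum d t := by
  have hsn : ⌊s⌋₊ < n := (Nat.floor_lt hs).2 (hst.trans htn)
  have htn' : ⌊t⌋₊ < n := (Nat.floor_lt (hs.trans hst.le)).2 htn
  by_cases hds : d ⌊s⌋₊ = 0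
  · rwa [fracPartialSum_eq_zero hd0 hd hs (hst.trans htn) hds]
  replace hds : 0 < d ⌊s⌋₊ := (hd0 _ hsn).lt_of_ne' hds
  rcases (Nat.floor_mono hst.le).eq_or_lt with heq | hlt
  · unfold fracPartialSum
    rw [← heq]
    gcongr
  · calc fracPartialSum d s < ∑ i ∈ range (⌊s⌋₊ + 1), d i := fracPartialSum_lt_sum_range_succ hds
      _ ≤ ∑ i ∈ range ⌊t⌋₊, d i := sum_range_le_sum_range hd0 hlt htn'.le
      _ ≤ fracPartialSum d t :=
          sum_range_floor_le_fracPartialSum (hs.trans hst.le) (hd0 _ htn')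

lemma le_iff_fracPartialSum_le (hd0 : ∀ i < n, 0 ≤ d i) (hd : MonotoneOn d (Set.Iio n))
    (hs : 0 ≤ s) (ht : 0 ≤ t) (hsn : s < n) (htn : t < n) (hpos : 0 < fracPartialSum d s) :
    s ≤ t ↔ fracPartialSum d s ≤ fracPartialSum d t :=
  ⟨fun hst => fracPartialSum_mono hd0 hs hst htn, fun hF =>
    not_lt.1 fun hts => (fracPartialSum_lt_of_lt hd0 hd ht hts hsn hpos).not_ge hF⟩

lemma fracPartialSum_natCast_add_eq_of_crossing {j : ℕ} {c p : ℝ}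
    (hle : ∑ i ∈ range j, d i ≤ c) (hlt : c < ∑ i ∈ range (j + 1), d i)
    (hp : p = (c - ∑ i ∈ range j, d i) / d j) :
    0 ≤ p ∧ p < 1 ∧ fracPartialSum d (j + p) = c := by
  rw [sum_range_succ] at hlt
  have hdj : 0 < d j := by linarith
  have hp0 : 0 ≤ p := hp ▸ div_nonneg (sub_nonneg.2 hle) hdj.le
  have hp1 : p < 1 := by rw [hp, div_lt_one hdj]; linarith
  refine ⟨hp0, hp1, ?_⟩
  rw [fracPartialSum_natCast_add d j hp0 hp1, hp, div_mul_cancel₀ _ hdj.ne']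
  ring

end FracPartialSum

/-- with `(j*, p*)` from the greedy construction, the worst-case probability
`(j* + p*)/N ≤ ε` holds if and only if the fractional partial sum of the `εN` smallest
distances, divided by `N`, is at least `θ`. -/
theorem stmt_8 (N : ℕ) (hN : 0 < N) (d : ℕ → ℝ)
    (hd0 : ∀ i, i < N → 0 ≤ d i)
    (hmono : ∀ i j, i ≤ j → j < N → d i ≤ d j)
    (θ : ℝ) (hθ : 0 < θ) (hbig : θ * N < ∑ i ∈ Finset.range N, d i)
    (ε : ℝ) (hε : 0 < ε ∧ ε < 1)
    (jstar : ℕ) (hj1 : jstar < N)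
    (hj2 : (∑ i ∈ Finset.range jstar, d i) ≤ θ * N)
    (hj3 : ∀ j, j < N → (∑ i ∈ Finset.range j, d i) ≤ θ * N → j ≤ jstar)
    (pstar : ℝ)
    (hp : pstar = (θ * N - ∑ i ∈ Finset.range jstar, d i) / d jstar) :
    ((jstar : ℝ) + pstar) / N ≤ ε ↔
      (1 / N : ℝ) * ((∑ i ∈ Finset.range ⌊ε * N⌋₊, d i)
        + (ε * N - (⌊ε * N⌋₊ : ℝ)) * d ⌊ε * N⌋₊) ≥ θ := by
  have hN' : (0 : ℝ) < N := Nat.cast_pos.2 hN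
  have hcross : θ * N < ∑ i ∈ range (jstar + 1), d i := by
    rcases (show jstar + 1 ≤ N from hj1).eq_or_lt with hlast | hnext
    · rwa [hlast]
    · exact lt_of_not_ge fun hle => (hj3 _ hnext hle).not_gt jstar.lt_succ_self
  obtain ⟨hp0, hp1, hFT⟩ := fracPartialSum_natCast_add_eq_of_crossing hj2 hcross hp
  have hT : (jstar : ℝ) + pstar < N := by
    have : (jstar : ℝ) + 1 ≤ N := by exact_mod_cast hj1
    linarith
  have hεN : ε * N < N := mul_lt_of_lt_one_left hN' hε.2
  rw [div_le_iff₀ hN', ge_iff_le, one_div, ← div_eq_inv_mul, le_div_iff₀ hN']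
  change _ ↔ θ * N ≤ fracPartialSum d (ε * N)
  rw [← hFT]
  exact le_iff_fracPartialSum_le hd0 (fun i _ j hj hij => hmono i j hij hj)
    (add_nonneg jstar.cast_nonneg hp0) (mul_nonneg hε.1.le hN'.le) hT hεN (hFT ▸ by positivity)
end

section
/- Let k_1, …, k_N ∈ ℝ (not necessarily sorted), ε ∈ (0,1), and let σ be a permutation sorting the k_i in nondecreasing order. The supremum over t ∈ ℝ of εN·t − ∑_{i=1}^N (t − k_i)⁺ is attained at t* = k_{σ(⌊εN⌋+1)}, and its value equals ∑_{i=1}^{⌊εN⌋} k_{σ(i)} + (εN − ⌊εN⌋) k_{σ(⌊εN⌋+1)}. -/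
/-!
Weak LP duality: for weights `0 ≤ gᵢ ≤ 1` one has `gᵢ (t - kᵢ) ≤ (t - kᵢ)⁺`, so summing gives
`(∑ gᵢ) t - ∑ (t - kᵢ)⁺ ≤ ∑ gᵢ kᵢ` for every `t`, with equality at any `t` where complementary
slackness `gᵢ (t - kᵢ) = (t - kᵢ)⁺` holds. For the sorted values `aᵢ = k_{σ(i)}` and `m = ⌊εN⌋`,
the weights `1` on the `m` smallest values, `εN - m` on `aₘ` and `0` above satisfy slackness at
`t = aₘ`, sum to `εN`, and give `∑ gᵢ aᵢ` equal to the fractional partial sum.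
-/

open Finset

section Duality

variable {ι : Type*} [Fintype ι] (a g : ι → ℝ)

theorem sum_mul_sub_sum_max_sub_le (hg : ∀ i, g i ∈ Set.Icc (0 : ℝ) 1) (t : ℝ) :
    (∑ i, g i) * t - ∑ i, max (t - a i) 0 ≤ ∑ i, g i * a i := by
  have hterm : ∀ i, g i * (t - a i) ≤ max (t - a i) 0 := fun i => by
    obtain ⟨hg0, hg1⟩ := hg i
    rcases le_total 0 (t - a i) with h | h
    · exact (mul_le_of_le_one_left h hg1).trans (le_max_left _ _)
    · exact (mul_nonpos_of_nonneg_of_nonpos hg0 h).trans (le_max_right _ _)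
  have := sum_le_sum fun i (_ : i ∈ univ) => hterm i
  simp only [mul_sub, sum_sub_distrib, ← sum_mul] at this
  linarith

theorem sum_mul_sub_sum_max_sub_eq {t : ℝ} (hslack : ∀ i, g i * (t - a i) = max (t - a i) 0) :
    (∑ i, g i) * t - ∑ i, max (t - a i) 0 = ∑ i, g i * a i := by
  simp only [← hslack, mul_sub, sum_sub_distrib, sum_mul]
  ring

theorem isGreatest_range_sum_mul_sub_sum_max_sub (hg : ∀ i, g i ∈ Set.Icc (0 : ℝ) 1) {t₀ : ℝ}
    (hslack : ∀ i, g i * (t₀ - a i) = max (t₀ - a i) 0) :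
    IsGreatest (Set.range fun t => (∑ i, g i) * t - ∑ i, max (t - a i) 0) (∑ i, g i * a i) :=
  ⟨⟨t₀, sum_mul_sub_sum_max_sub_eq a g hslack⟩, by
    rintro _ ⟨t, rfl⟩
    exact sum_mul_sub_sum_max_sub_le a g hg t⟩

end Duality

section SortedWeight

variable {N m : ℕ} (hm : m < N) (c : ℝ)

def sortedWeight (i : Fin N) : ℝ :=
  (if (i : ℕ) < m then 1 else 0) + (Pi.single ⟨m, hm⟩ (c - m) : Fin N → ℝ) i

theorem sum_sortedWeight : ∑ i, sortedWeight hm c i = c := by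
  simp [sortedWeight, sum_add_distrib, Fin.card_filter_val_lt, hm.le]

theorem sum_sortedWeight_mul (a : Fin N → ℝ) :
    ∑ i, sortedWeight hm c i * a i
      = ∑ i ∈ univ.filter fun i : Fin N => (i : ℕ) < m, a i + (c - m) * a ⟨m, hm⟩ := by
  simp [sortedWeight, add_mul, sum_add_distrib, ite_mul, sum_ite, Pi.single_apply]

theorem sortedWeight_mem_Icc (hmc : (m : ℝ) ≤ c) (hcm : c ≤ m + 1) (i : Fin N) :
    sortedWeight hm c i ∈ Set.Icc (0 : ℝ) 1 := by
  rcases lt_trichotomy i ⟨m, hm⟩ with h | rfl | h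
  · simp [sortedWeight, Fin.lt_def.mp h, h.ne]
  · simp only [sortedWeight, lt_irrefl, if_false, Pi.single_eq_same, zero_add, Set.mem_Icc]
    constructor <;> linarith
  · simp [sortedWeight, (Fin.lt_def.mp h).not_gt, h.ne']

theorem sortedWeight_mul_sub_eq_max {a : Fin N → ℝ} (ha : Monotone a) (i : Fin N) :
    sortedWeight hm c i * (a ⟨m, hm⟩ - a i) = max (a ⟨m, hm⟩ - a i) 0 := by
  rcases lt_trichotomy i ⟨m, hm⟩ with h | rfl | h
  · have hle : a i ≤ a ⟨m, hm⟩ := ha h.le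
    simp [sortedWeight, Fin.lt_def.mp h, h.ne, hle]
  · simp
  · have hle : a ⟨m, hm⟩ ≤ a i := ha h.le
    simp [sortedWeight, (Fin.lt_def.mp h).not_gt, h.ne', hle]

end SortedWeight

theorem stmt_10_general (N : ℕ) (ε : ℝ) (hε : 0 < ε ∧ ε < 1)
    (k : Fin N → ℝ) (σ : Equiv.Perm (Fin N))
    (hsort : Monotone fun i => k (σ i))
    (hm : ⌊ε * N⌋₊ < N) :
    IsGreatest {val : ℝ | ∃ t : ℝ, val = ε * N * t - ∑ i, max (t - k i) 0}
      ((∑ i ∈ Finset.univ.filter fun i : Fin N => (i : ℕ) < ⌊ε * N⌋₊, k (σ i))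
        + (ε * N - (⌊ε * N⌋₊ : ℝ)) * k (σ ⟨⌊ε * N⌋₊, hm⟩)) ∧
    ε * N * k (σ ⟨⌊ε * N⌋₊, hm⟩) - (∑ i, max (k (σ ⟨⌊ε * N⌋₊, hm⟩) - k i) 0)
      = (∑ i ∈ Finset.univ.filter fun i : Fin N => (i : ℕ) < ⌊ε * N⌋₊, k (σ i))
        + (ε * N - (⌊ε * N⌋₊ : ℝ)) * k (σ ⟨⌊ε * N⌋₊, hm⟩) := by
  set a : Fin N → ℝ := fun i => k (σ i)
  have hreindex (t : ℝ) : ∑ i, max (t - k i) 0 = ∑ i, max (t - a i) 0 :=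
    (Equiv.sum_comp σ fun i => max (t - k i) 0).symm
  have hεN : 0 ≤ ε * N := mul_nonneg hε.1.le N.cast_nonneg
  have hg := sortedWeight_mem_Icc hm (ε * N) (Nat.floor_le hεN) (Nat.lt_floor_add_one _).le
  have hslack := sortedWeight_mul_sub_eq_max hm (ε * N) hsort
  have hsum := sum_sortedWeight hm (ε * N)
  rw [← sum_sortedWeight_mul hm (ε * N) a]
  simp_rw [hreindex]
  have hvalue := sum_mul_sub_sum_max_sub_eq a _ hslack
  have hmax := isGreatest_range_sum_mul_sub_sum_max_sub a _ hg hslack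
  rw [hsum] at hvalue hmax
  refine ⟨?_, hvalue⟩
  convert hmax using 1
  ext v
  simp [eq_comm]

/-- for arbitrary `k ∈ ℝ^N`, `ε ∈ (0,1)` and a sorting permutation `σ`,
the supremum over `t` of `εN·t − ∑ (t − k_i)⁺` is attained at `t* = k_{σ(⌊εN⌋+1)}`
(0-indexed: `k (σ ⟨⌊εN⌋, _⟩)`) and equals the sorted fractional partial sum. -/
theorem stmt_10 (N : ℕ) (hN : 0 < N) (ε : ℝ) (hε : 0 < ε ∧ ε < 1)
    (k : Fin N → ℝ) (σ : Equiv.Perm (Fin N))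
    (hsort : Monotone fun i => k (σ i))
    (hm : ⌊ε * N⌋₊ < N) :
    IsGreatest {val : ℝ | ∃ t : ℝ, val = ε * N * t - ∑ i, max (t - k i) 0}
      ((∑ i ∈ Finset.univ.filter fun i : Fin N => (i : ℕ) < ⌊ε * N⌋₊, k (σ i))
        + (ε * N - (⌊ε * N⌋₊ : ℝ)) * k (σ ⟨⌊ε * N⌋₊, hm⟩)) ∧
    ε * N * k (σ ⟨⌊ε * N⌋₊, hm⟩) - (∑ i, max (k (σ ⟨⌊ε * N⌋₊, hm⟩) - k i) 0)
      = (∑ i ∈ Finset.univ.filter fun i : Fin N => (i : ℕ) < ⌊ε * N⌋₊, k (σ i))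
        + (ε * N - (⌊ε * N⌋₊ : ℝ)) * k (σ ⟨⌊ε * N⌋₊, hm⟩) :=
  stmt_10_general N ε hε k σ hsort hm
end

section
/- Let W₁, V ⊂ ℝ^{L+2} be disjoint convex sets where V = {(x, s, t) ∣ (g(x))⁺ < t − s} for an affine function g: ℝ^L → ℝ, and let W̄ = conv(W₁ ∪ {(x,s,t) ∣ g(x) = 0 and t − s = 0}). Then there exists κ ∈ [0,1] such that the halfspace {(x,s,t) ∣ κ·g(x) ≥ t − s} contains W̄ and is disjoint from V. -/
/-!
With `G p = g x` and `F p = t - s`, the slopes `F p / G p` of the points of `W₁` with `G p > 0`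
all lie below those of the points with `G p < 0`: on the segment joining two such points, the
zero of `G` is a point of `W₁` where `F ≤ 0`. Any `κ` between the two sets of slopes, clipped
to `[0, 1]`, puts `W₁` in the halfspace `F ≤ κ G`. That halfspace is convex, contains
`{G = 0 = F}`, and misses `V` because `κ G ≤ max G 0`.
-/

open Set

theorem exists_mem_Icc_mem_upperBounds_lowerBounds {α : Type*} [ConditionallyCompleteLattice α]
    {lo hi : α} (h : lo ≤ hi) {A B : Set α} (hA : hi ∈ upperBounds A) (hB : lo ∈ lowerBounds B)
    (hAB : ∀ a ∈ A, a ∈ lowerBounds B) :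
    ∃ κ ∈ Icc lo hi, κ ∈ upperBounds A ∧ κ ∈ lowerBounds B := by
  have hne : (insert lo A).Nonempty := insert_nonempty lo A
  have hbdd : hi ∈ upperBounds (insert lo A) := by
    rintro x (rfl | hx)
    exacts [h, hA hx]
  refine ⟨sSup (insert lo A), ⟨le_csSup ⟨hi, hbdd⟩ (mem_insert lo A), csSup_le hne hbdd⟩,
    fun a ha ↦ le_csSup ⟨hi, hbdd⟩ (mem_insert_of_mem lo ha), fun b hb ↦ csSup_le hne ?_⟩
  rintro x (rfl | hx)
  exacts [hB hb, hAB x hx hb]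

theorem mul_le_max_zero {κ y : ℝ} (hκ : κ ∈ Icc (0 : ℝ) 1) : κ * y ≤ max y 0 := by
  rcases le_total y 0 with hy | hy
  · exact le_max_of_le_right (mul_nonpos_of_nonneg_of_nonpos hκ.1 hy)
  · exact le_max_of_le_left (mul_le_of_le_one_left hy hκ.2)

section Slope

variable {E : Type*} [AddCommGroup E] [Module ℝ E] {W : Set E} {G F : E →ᵃ[ℝ] ℝ}

theorem Convex.div_le_div_of_forall_eq_zero_nonpos (hW : Convex ℝ W)
    (hzero : ∀ r ∈ W, G r = 0 → F r ≤ 0) {p q : E} (hp : p ∈ W) (hq : q ∈ W)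
    (hGp : 0 < G p) (hGq : G q < 0) : F p / G p ≤ F q / G q := by
  have hd : 0 < G p - G q := by linarith
  set t := G p / (G p - G q)
  have ht : t ∈ Icc (0 : ℝ) 1 :=
    ⟨div_nonneg hGp.le hd.le, (div_le_one hd).2 (by linarith)⟩
  have hmul : t * (G p - G q) = G p := div_mul_cancel₀ _ hd.ne'
  have hGr : G (AffineMap.lineMap p q t) = 0 := by
    rw [AffineMap.apply_lineMap, AffineMap.lineMap_apply_ring']
    linear_combination -hmul
  have hFr := hzero _ (hW.lineMap_mem hp hq ht) hGr
  rw [AffineMap.apply_lineMap, AffineMap.lineMap_apply_ring'] at hFr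
  have hcross : G p * F q - G q * F p ≤ 0 :=
    calc G p * F q - G q * F p = (t * (F q - F p) + F p) * (G p - G q) := by
          linear_combination -(F q - F p) * hmul
      _ ≤ 0 := mul_nonpos_of_nonpos_of_nonneg hFr hd.le
  rw [le_div_iff_of_neg hGq, div_mul_eq_mul_div, le_div_iff₀ hGp]
  linarith

theorem Convex.exists_mem_Icc_forall_le_mul_of_le_max (hW : Convex ℝ W)
    (hFG : ∀ p ∈ W, F p ≤ max (G p) 0) : ∃ κ ∈ Icc (0 : ℝ) 1, ∀ p ∈ W, F p ≤ κ * G p := by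
  have hzero : ∀ r ∈ W, G r = 0 → F r ≤ 0 := fun r hr h0 ↦ by simpa [h0] using hFG r hr
  obtain ⟨κ, hκ, hpos, hneg⟩ := exists_mem_Icc_mem_upperBounds_lowerBounds zero_le_one
    (A := (fun p ↦ F p / G p) '' {p ∈ W | 0 < G p})
    (B := (fun p ↦ F p / G p) '' {p ∈ W | G p < 0})
    (by
      rintro _ ⟨p, ⟨hp, hGp⟩, rfl⟩
      exact (div_le_one hGp).2 ((hFG p hp).trans_eq (max_eq_left hGp.le)))
    (by
      rintro _ ⟨p, ⟨hp, hGp⟩, rfl⟩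
      exact div_nonneg_of_nonpos ((hFG p hp).trans_eq (max_eq_right hGp.le)) hGp.le)
    (by
      rintro _ ⟨p, ⟨hp, hGp⟩, rfl⟩ _ ⟨q, ⟨hq, hGq⟩, rfl⟩
      exact hW.div_le_div_of_forall_eq_zero_nonpos hzero hp hq hGp hGq)
  refine ⟨κ, hκ, fun p hp ↦ ?_⟩
  rcases lt_trichotomy (G p) 0 with hGp | hGp | hGp
  · exact (le_div_iff_of_neg hGp).1 (hneg ⟨p, ⟨hp, hGp⟩, rfl⟩)
  · simpa [hGp] using hzero p hp hGp
  · exact (div_le_iff₀ hGp).1 (hpos ⟨p, ⟨hp, hGp⟩, rfl⟩)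

theorem Convex.exists_slope_halfSpace (hW : Convex ℝ W)
    (hdisj : W ∩ {p | max (G p) 0 < F p} = ∅) :
    ∃ κ ∈ Icc (0 : ℝ) 1,
      convexHull ℝ (W ∪ {p | G p = 0 ∧ F p = 0}) ⊆ {p | κ * G p ≥ F p} ∧
      {p | κ * G p ≥ F p} ∩ {p | max (G p) 0 < F p} = ∅ := by
  have hFG : ∀ p ∈ W, F p ≤ max (G p) 0 := fun p hp ↦
    not_lt.1 fun h ↦ eq_empty_iff_forall_notMem.1 hdisj p ⟨hp, h⟩
  obtain ⟨κ, hκ, hWκ⟩ := hW.exists_mem_Icc_forall_le_mul_of_le_max hFG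
  have hconv : Convex ℝ {p | κ * G p ≥ F p} := by
    have h : {p | κ * G p ≥ F p} = (κ • G - F) ⁻¹' Ici 0 := by
      ext p
      simp [sub_nonneg]
    exact h ▸ (convex_Ici 0).affine_preimage _
  refine ⟨κ, hκ, convexHull_min ?_ hconv, eq_empty_of_forall_notMem fun p ⟨hle, hlt⟩ ↦ ?_⟩
  · rintro p (hp | ⟨hG, hF⟩)
    exacts [hWκ p hp, by simp [hG, hF]]
  · exact (mul_le_max_zero hκ).not_gt (hlt.trans_le hle)

end Slope

/-- separating hyperplane with slope in `[0,1]`. With affine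
`g(x) = ∑ w_i x_i + c`, `V = {(x,s,t) : (g x)⁺ < t − s}` and convex `W₁` disjoint from
`V`, there is `κ ∈ [0,1]` such that the halfspace `{(x,s,t) : κ·g(x) ≥ t − s}` contains
`conv(W₁ ∪ {(x,s,t) : g x = 0 ∧ t − s = 0})` and is disjoint from `V`. -/
theorem stmt_17 (L : ℕ) (w : Fin L → ℝ) (c : ℝ)
    (W₁ : Set ((Fin L → ℝ) × ℝ × ℝ)) (hW : Convex ℝ W₁)
    (hdisj : W₁ ∩ {p : (Fin L → ℝ) × ℝ × ℝ |
        max ((∑ i, w i * p.1 i) + c) 0 < p.2.2 - p.2.1} = ∅) :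
    ∃ κ ∈ Set.Icc (0 : ℝ) 1,
      convexHull ℝ (W₁ ∪ {p : (Fin L → ℝ) × ℝ × ℝ |
          (∑ i, w i * p.1 i) + c = 0 ∧ p.2.2 - p.2.1 = 0})
        ⊆ {p : (Fin L → ℝ) × ℝ × ℝ |
          κ * ((∑ i, w i * p.1 i) + c) ≥ p.2.2 - p.2.1} ∧
      {p : (Fin L → ℝ) × ℝ × ℝ |
          κ * ((∑ i, w i * p.1 i) + c) ≥ p.2.2 - p.2.1} ∩
        {p : (Fin L → ℝ) × ℝ × ℝ |
          max ((∑ i, w i * p.1 i) + c) 0 < p.2.2 - p.2.1} = ∅ := by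
  let G : (Fin L → ℝ) × ℝ × ℝ →ᵃ[ℝ] ℝ :=
    ((∑ i, w i • LinearMap.proj i) ∘ₗ LinearMap.fst ℝ _ _).toAffineMap + AffineMap.const ℝ _ c
  let F : (Fin L → ℝ) × ℝ × ℝ →ᵃ[ℝ] ℝ :=
    ((LinearMap.snd ℝ ℝ ℝ - LinearMap.fst ℝ ℝ ℝ) ∘ₗ LinearMap.snd ℝ _ _).toAffineMap
  have hG (p : (Fin L → ℝ) × ℝ × ℝ) : G p = (∑ i, w i * p.1 i) + c := by simp [G]
  have hF (p : (Fin L → ℝ) × ℝ × ℝ) : F p = p.2.2 - p.2.1 := rfl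
  simpa only [hG, hF] using
    hW.exists_slope_halfSpace (G := G) (F := F) (by simpa only [hG, hF] using hdisj)
end
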